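/- arXiv:math/0502250 — 5 statements merged into one kernel-verified Lean document; each statement's English description precedes it below -/
import Mathlib

section
/- Let q be an odd prime power, F = F_q, E = F_{q^2}. Let N = {z ∈ E^× : z^{q+1} = 1} be the norm-one subgroup, of order q+1. The map φ restricted to S = {1+z : z ∈ N, z ≠ -1} given by w ↦ w/w^q is injective, and its image is N \ {-1}. -/
/-- The map `w ↦ w / w^q` restricted to `S = {1 + z : z ∈ N, z ≠ -1}` (where
`N = {z ∈ E^× : z^(q+1) = 1}` is the norm-one subgroup of `E = F_{q²}`) is injective,
and its image is `N \ {-1}`. -/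
theorem stmt0 (q : ℕ) (hq : IsPrimePow q) (hodd : Odd q)
    (E : Type*) [Field E] [Fintype E] (hE : Fintype.card E = q ^ 2) :
    Set.InjOn (fun w : E => w / w ^ q)
      {w : E | ∃ z : E, z ^ (q + 1) = 1 ∧ z ≠ -1 ∧ w = 1 + z} ∧
    (fun w : E => w / w ^ q) ''
      {w : E | ∃ z : E, z ^ (q + 1) = 1 ∧ z ≠ -1 ∧ w = 1 + z}
      = {z : E | z ^ (q + 1) = 1} \ {-1} := by
  obtain ⟨p, k, hp, hk, hq'⟩ := hq
  have hp' : Nat.Prime p := hp.nat_prime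
  -- characteristic of E is p
  set r := ringChar E with hr
  haveI : CharP E r := ringChar.charP E
  have hrp : Nat.Prime r := CharP.char_is_prime E r
  haveI : Fact (Nat.Prime r) := ⟨hrp⟩
  obtain ⟨n, _, hcard⟩ := FiniteField.card E r
  have hpr : p = r := by
    have h1 : r ^ (n : ℕ) = p ^ (2 * k) := by
      rw [← hcard, hE, ← hq', ← pow_mul, mul_comm]
    have : r ∣ p ^ (2 * k) := h1 ▸ dvd_pow_self r n.pos.ne'
    exact ((Nat.prime_dvd_prime_iff_eq hrp hp').mp (hrp.dvd_of_dvd_pow this)).symm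
  have key : ∀ z : E, z ^ (q + 1) = 1 → z ≠ -1 → (1 + z) / (1 + z) ^ q = z := by
    intro z h1 h2
    have hz0 : z ≠ 0 := by
      intro h; rw [h, zero_pow (Nat.succ_ne_zero q)] at h1; exact zero_ne_one h1
    have hw : (1 : E) + z ≠ 0 := by
      intro h; exact h2 (by linear_combination h)
    have hq1 : (1 + z) ^ q = 1 + z ^ q := by
      rw [← hq', hpr]
      simpa using add_pow_char_pow (x := (1:E)) (y := z) (p := r) (n := k)
    have hzq : z ^ q = z⁻¹ := by
      apply eq_inv_of_mul_eq_one_left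
      rw [← pow_succ]; exact h1
    have hw2 : (1 : E) + z⁻¹ ≠ 0 := by
      intro h
      apply hw
      have := mul_eq_zero_of_right z h
      field_simp at this
      linear_combination this
    rw [hq1, hzq, div_eq_iff hw2]
    field_simp
    ring
  constructor
  · rintro w₁ ⟨z₁, hz1, hz1', rfl⟩ w₂ ⟨z₂, hz2, hz2', rfl⟩ heq
    simp only at heq
    rw [key z₁ hz1 hz1', key z₂ hz2 hz2'] at heq
    rw [heq]
  · ext z
    constructor
    · rintro ⟨w, ⟨z', hz', hz'', rfl⟩, rfl⟩
      simp only
      rw [key z' hz' hz'']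
      exact ⟨hz', hz''⟩
    · rintro ⟨hz1, hz2⟩
      simp only [Set.mem_singleton_iff] at hz2
      exact ⟨1 + z, ⟨z, hz1, hz2, rfl⟩, key z hz1 hz2⟩
end

section
/- Let q be an odd prime power, E = F_{q^2}, and Λ a multiplicative character of E^× trivial on F_q^× with Λ^2 ≠ 1. Then the sum over z ∈ E^× with z^{q+1} = 1 and z ≠ -1 of Λ(1+z) equals -Λ(√δ), where δ is a fixed nonsquare of F_q and √δ ∈ E a square root; in particular this sum is ±1. -/
/-- For a character `Λ` of `E^× = F_{q²}^×` trivial on `F_q^×` with `Λ² ≠ 1`,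
`∑_{z^(q+1)=1, z ≠ -1} Λ(1+z) = -Λ(√δ) = ±1`, where `δ` is a nonsquare of `F_q`. -/
theorem stmt1 (q : ℕ) (hq : IsPrimePow q) (hodd : Odd q)
    (F E : Type*) [Field F] [Fintype F] [Field E] [Fintype E] [DecidableEq E] [Algebra F E]
    (hF : Fintype.card F = q) (hE : Fintype.card E = q ^ 2)
    (δ : F) (hδ : ¬ IsSquare δ) (sd : E) (hsd : sd ^ 2 = algebraMap F E δ)
    (Λ : MulChar E ℂ)
    (hΛF : ∀ x : F, x ≠ 0 → Λ (algebraMap F E x) = 1)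
    (hΛ2 : Λ * Λ ≠ 1) :
    ∑ z ∈ Finset.univ.filter (fun z : E => z ^ (q + 1) = 1 ∧ z ≠ -1), Λ (1 + z)
      = -Λ sd ∧ (-Λ sd = 1 ∨ -Λ sd = -1) := by
  classical
  obtain ⟨p, n, hp, hn, hpn⟩ := hq
  have hpnat : p.Prime := Nat.prime_iff.mpr hp
  have hq2 : 2 ≤ q := by
    rw [← hpn]
    calc 2 ≤ p := hpnat.two_le
    _ ≤ p ^ n := Nat.le_self_pow (by omega) p
  -- characteristic of E is p
  have hcardE : Fintype.card E = p ^ (2 * n) := by rw [hE, ← hpn, ← pow_mul, mul_comm]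
  haveI : CharP E p := by
    rcases FiniteField.card E (ringChar E) with ⟨m, hpr, hcm⟩
    have hdvd : ringChar E ∣ p ^ (2 * n) := by
      rw [← hcardE, hcm]
      exact dvd_pow_self _ (by exact_mod_cast m.ne_zero)
    have : ringChar E = p := by
      have := hpr.dvd_of_dvd_pow hdvd
      exact (Nat.prime_dvd_prime_iff_eq hpr hpnat).mp this
    exact this ▸ ringChar.charP E
  haveI : Fact p.Prime := ⟨hpnat⟩
  have frob_add : ∀ x y : E, (x + y) ^ q = x ^ q + y ^ q := by
    intro x y
    rw [← hpn]
    exact add_pow_char_pow x y p n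
  set f : F →+* E := algebraMap F E with hf
  have finj : Function.Injective f := f.injective
  -- fixed points of Frobenius
  have hfix : ∀ x : E, x ≠ 0 → x ^ (q - 1) = 1 → ∃ c : F, c ≠ 0 ∧ f c = x := by
    intro x hx0 hx
    have hq1 : 0 < q - 1 := by omega
    set A : Finset E := Finset.univ.filter (fun y : E => y ^ (q - 1) = 1) with hA
    have hsub : A ⊆ (Polynomial.nthRoots (q - 1) (1 : E)).toFinset := by
      intro y hy
      rw [Multiset.mem_toFinset, Polynomial.mem_nthRoots hq1]
      exact (Finset.mem_filter.mp hy).2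
    have hcardA : A.card ≤ q - 1 :=
      le_trans (Finset.card_le_card hsub)
        (le_trans (Multiset.toFinset_card_le _) (Polynomial.card_nthRoots _ _))
    set Fx : Finset F := Finset.univ.filter (fun c : F => c ≠ 0) with hFx
    have hFxcard : Fx.card = q - 1 := by
      rw [hFx, Finset.filter_ne', Finset.card_erase_of_mem (Finset.mem_univ _),
        Finset.card_univ, hF]
    have hBA : Fx.image f ⊆ A := by
      intro y hy
      obtain ⟨c, hc, rfl⟩ := Finset.mem_image.mp hy
      have hc0 : c ≠ 0 := (Finset.mem_filter.mp hc).2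
      rw [hA, Finset.mem_filter]
      refine ⟨Finset.mem_univ _, ?_⟩
      rw [← map_pow]
      have : c ^ (q - 1) = 1 := by
        have := FiniteField.pow_card_sub_one_eq_one c hc0
        rwa [hF] at this
      rw [this, map_one]
    have hBcard : (Fx.image f).card = q - 1 := by
      rw [Finset.card_image_of_injective _ finj, hFxcard]
    have hEq : Fx.image f = A :=
      Finset.eq_of_subset_of_card_le hBA (by rw [hBcard]; exact hcardA)
    have hxA : x ∈ A := by rw [hA, Finset.mem_filter]; exact ⟨Finset.mem_univ _, hx⟩
    rw [← hEq] at hxA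
    obtain ⟨c, hc, hcx⟩ := Finset.mem_image.mp hxA
    exact ⟨c, (Finset.mem_filter.mp hc).2, hcx⟩
  -- basic facts
  have hδ0 : δ ≠ 0 := fun h => hδ (h ▸ ⟨0, by ring⟩)
  have hsd0 : sd ≠ 0 := by
    intro h
    apply hδ0
    apply finj
    rw [← hsd, h, map_zero]
    ring
  have hqmod : q % 2 = 1 := Nat.odd_iff.mp hodd
  have hringF : ringChar F ≠ 2 := by
    intro h
    have := FiniteField.even_card_of_char_two h
    rw [hF] at this
    omega
  have hδpow : δ ^ (q / 2) = -1 := by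
    have hd := FiniteField.pow_dichotomy hringF hδ0
    rw [hF] at hd
    rcases hd with h | h
    · exfalso
      apply hδ
      rw [FiniteField.isSquare_iff hringF hδ0, hF]
      exact h
    · exact h
  have h2q : 2 * (q / 2) = q - 1 := by omega
  have hsdq1 : sd ^ (q - 1) = -1 := by
    calc sd ^ (q - 1) = (sd ^ 2) ^ (q / 2) := by rw [← pow_mul, h2q]
    _ = f (δ ^ (q / 2)) := by rw [hsd, map_pow]
    _ = -1 := by rw [hδpow, map_neg, map_one]
  -- character facts
  have hΛ1 : Λ ≠ 1 := by
    intro h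
    exact hΛ2 (by rw [h, one_mul])
  have hΛmul : ∀ (c : F), c ≠ 0 → ∀ x : E, Λ (f c * x) = Λ x := by
    intro c hc x
    rw [map_mul, hΛF c hc, one_mul]
  have hΛsd : Λ sd * Λ sd = 1 := by
    rw [← map_mul, ← pow_two, hsd]
    exact hΛF δ hδ0
  have hpm : -Λ sd = 1 ∨ -Λ sd = -1 := by
    rcases mul_self_eq_one_iff.mp hΛsd with h | h
    · right; rw [h]
    · left; rw [h]; ring
  refine ⟨?_, hpm⟩
  -- the main computation
  set Fx : Finset F := Finset.univ.filter (fun c : F => c ≠ 0) with hFx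
  have hFxcard : Fx.card = q - 1 := by
    rw [hFx, Finset.filter_ne', Finset.card_erase_of_mem (Finset.mem_univ _),
      Finset.card_univ, hF]
  set T : Finset E := Finset.univ.filter (fun z : E => z ^ (q + 1) = 1 ∧ z ≠ -1) with hT
  set U : Finset E := Finset.univ.filter (fun e : E => e ≠ 0) with hU
  -- facts about norm-one elements
  have hz0 : ∀ z : E, z ^ (q + 1) = 1 → z ≠ 0 := by
    intro z hz h
    rw [h, zero_pow (by omega)] at hz
    exact zero_ne_one hz
  have h1z0 : ∀ z : E, z ≠ -1 → (1 : E) + z ≠ 0 := by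
    intro z hz h
    exact hz (by linear_combination h)
  have hpow1z : ∀ z : E, z ^ (q + 1) = 1 → z ≠ -1 → (1 + z) ^ (q - 1) = z⁻¹ := by
    intro z hz hz1
    have hz0' := hz0 z hz
    have h1z0' := h1z0 z hz1
    have hzq : z ^ q = z⁻¹ := by
      field_simp
      rw [← pow_succ, hz]
    have hq' : (1 + z) ^ q = (1 + z) * z⁻¹ := by
      rw [frob_add, one_pow, hzq]
      field_simp
      ring
    have : (1 + z) ^ (q - 1) * (1 + z) = (1 + z) * z⁻¹ := by
      rw [← hq', ← pow_succ]
      congr 1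
      omega
    rw [mul_comm (1 + z) z⁻¹] at this
    exact mul_right_cancel₀ h1z0' this
  have hfc : ∀ c : F, c ≠ 0 → (f c) ^ (q - 1) = 1 := by
    intro c hc
    rw [← map_pow]
    have := FiniteField.pow_card_sub_one_eq_one c hc
    rw [hF] at this
    rw [this, map_one]
  -- total sum is zero
  have htotal : ∑ e ∈ U, Λ e = 0 := by
    rw [hU]
    rw [Finset.sum_filter_of_ne (by intro x _ hx h0; exact hx (by rw [h0]; exact Λ.map_nonunit (by simp)))]
    exact MulChar.sum_eq_zero_of_ne_one hΛ1
  have hsplit : ∑ e ∈ U.filter (fun e => e ^ (q - 1) = -1), Λ e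
      + ∑ e ∈ U.filter (fun e => ¬ e ^ (q - 1) = -1), Λ e = 0 := by
    rw [Finset.sum_filter_add_sum_filter_not]
    exact htotal
  -- sum over B
  have hBsum : ∑ e ∈ U.filter (fun e => e ^ (q - 1) = -1), Λ e = ((q - 1 : ℕ) : ℂ) * Λ sd := by
    rw [← Finset.sum_bij (i := fun (c : F) (_ : c ∈ Fx) => f c * sd)
      (t := U.filter (fun e => e ^ (q - 1) = -1)) (g := Λ) (f := fun _ => Λ sd)]
    · rw [Finset.sum_const, hFxcard, nsmul_eq_mul]
    · intro c hc
      have hc0 : c ≠ 0 := (Finset.mem_filter.mp hc).2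
      simp only [hU, Finset.mem_filter, Finset.mem_univ, true_and]
      constructor
      · exact mul_ne_zero (fun h => hc0 (finj (by rw [h, map_zero]))) hsd0
      · rw [mul_pow, hfc c hc0, hsdq1, one_mul]
    · intro c₁ h₁ c₂ h₂ h
      exact finj (mul_right_cancel₀ hsd0 h)
    · intro e he
      simp only [hU, Finset.mem_filter, Finset.mem_univ, true_and] at he
      obtain ⟨he0, hepow⟩ := he
      have hx : (e * sd⁻¹) ^ (q - 1) = 1 := by
        rw [mul_pow, hepow, inv_pow, hsdq1]
        norm_num
      obtain ⟨c, hc0, hc⟩ := hfix _ (mul_ne_zero he0 (inv_ne_zero hsd0)) hx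
      refine ⟨c, Finset.mem_filter.mpr ⟨Finset.mem_univ _, hc0⟩, ?_⟩
      rw [hc]
      field_simp
    · intro c hc
      exact (hΛmul c (Finset.mem_filter.mp hc).2 sd).symm
  -- sum over C
  have hq21 : (q - 1) * (q + 1) = q ^ 2 - 1 := by
    obtain ⟨k, rfl⟩ : ∃ k, q = k + 1 := ⟨q - 1, by omega⟩
    have : (k + 1) ^ 2 = k * (k + 2) + 1 := by ring
    simp [this]
  have hCsum : ∑ e ∈ U.filter (fun e => ¬ e ^ (q - 1) = -1), Λ e
      = ((q - 1 : ℕ) : ℂ) * ∑ z ∈ T, Λ (1 + z) := by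
    rw [← Finset.sum_bij (i := fun (zc : E × F) (_ : zc ∈ T ×ˢ Fx) => f zc.2 * (1 + zc.1))
      (s := T ×ˢ Fx) (g := Λ) (f := fun zc => Λ (1 + zc.1))]
    · rw [Finset.sum_product, Finset.mul_sum]
      refine Finset.sum_congr rfl fun z hz => ?_
      simp only [Finset.sum_const, hFxcard, nsmul_eq_mul]
    · intro zc hzc
      obtain ⟨hzT, hcF⟩ := Finset.mem_product.mp hzc
      obtain ⟨-, hz, hz1⟩ := Finset.mem_filter.mp hzT
      have hc0 : zc.2 ≠ 0 := (Finset.mem_filter.mp hcF).2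
      have h1 : (1 : E) + zc.1 ≠ 0 := h1z0 _ hz1
      simp only [hU, Finset.mem_filter, Finset.mem_univ, true_and]
      constructor
      · exact mul_ne_zero (fun h => hc0 (finj (by rw [h, map_zero]))) h1
      · rw [mul_pow, hfc _ hc0, one_mul, hpow1z _ hz hz1]
        intro h
        apply hz1
        rw [← inv_inv zc.1, h]
        norm_num
    · intro zc₁ h₁ zc₂ h₂ h
      obtain ⟨hzT₁, hcF₁⟩ := Finset.mem_product.mp h₁
      obtain ⟨hzT₂, hcF₂⟩ := Finset.mem_product.mp h₂
      obtain ⟨-, hz₁, hz11⟩ := Finset.mem_filter.mp hzT₁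
      obtain ⟨-, hz₂, hz21⟩ := Finset.mem_filter.mp hzT₂
      have hc₁ : zc₁.2 ≠ 0 := (Finset.mem_filter.mp hcF₁).2
      have hc₂ : zc₂.2 ≠ 0 := (Finset.mem_filter.mp hcF₂).2
      have hzz : zc₁.1 = zc₂.1 := by
        have := congrArg (fun x : E => x ^ (q - 1)) h
        simp only [mul_pow, hfc _ hc₁, hfc _ hc₂, one_mul,
          hpow1z _ hz₁ hz11, hpow1z _ hz₂ hz21] at this
        exact inv_injective this
      have : f zc₁.2 = f zc₂.2 := by
        rw [hzz] at h
        exact mul_right_cancel₀ (h1z0 _ hz21) h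
      exact Prod.ext hzz (finj this)
    · intro e he
      simp only [hU, Finset.mem_filter, Finset.mem_univ, true_and] at he
      obtain ⟨he0, hepow⟩ := he
      set w : E := e ^ (q - 1) with hw
      have hw1 : w ^ (q + 1) = 1 := by
        rw [hw, ← pow_mul, hq21]
        have := FiniteField.pow_card_sub_one_eq_one e he0
        rwa [hE] at this
      have hwne : w ≠ -1 := hepow
      have hw0 : w ≠ 0 := hz0 w hw1
      set z : E := w⁻¹ with hz
      have hzpow : z ^ (q + 1) = 1 := by rw [hz, inv_pow, hw1, inv_one]
      have hzne : z ≠ -1 := by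
        intro h
        apply hwne
        rw [← inv_inv w, ← hz, h]
        norm_num
      have h1z : (1 : E) + z ≠ 0 := h1z0 _ hzne
      have hpz : (1 + z) ^ (q - 1) = w := by rw [hpow1z _ hzpow hzne, hz, inv_inv]
      have hx : (e * (1 + z)⁻¹) ^ (q - 1) = 1 := by
        rw [mul_pow, inv_pow, hpz, ← hw, mul_inv_cancel₀ hw0]
      obtain ⟨c, hc0, hc⟩ := hfix _ (mul_ne_zero he0 (inv_ne_zero h1z)) hx
      refine ⟨(z, c), Finset.mem_product.mpr ⟨Finset.mem_filter.mpr ⟨Finset.mem_univ _, hzpow, hzne⟩,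
        Finset.mem_filter.mpr ⟨Finset.mem_univ _, hc0⟩⟩, ?_⟩
      simp only
      rw [hc]
      field_simp
    · intro zc hzc
      obtain ⟨hzT, hcF⟩ := Finset.mem_product.mp hzc
      exact (hΛmul _ (Finset.mem_filter.mp hcF).2 _).symm
  -- conclude
  rw [hBsum, hCsum] at hsplit
  have hqne : ((q - 1 : ℕ) : ℂ) ≠ 0 := Nat.cast_ne_zero.mpr (by omega)
  have hfin : ∑ z ∈ T, Λ (1 + z) = -Λ sd := by
    apply mul_left_cancel₀ hqne
    rw [mul_neg]
    linear_combination hsplit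
  exact hfin
end

section
/- Let q be an odd prime power, E = F_{q^2} = F_q(√δ) with δ a nonsquare in F_q, ψ a nontrivial additive character of F_q, and Λ a character of E^× trivial on F_q^× with Λ^2 ≠ 1. Then the Gauss sum Γ(Λ, ψ∘tr) = Σ_{z ∈ E^×} Λ(z) ψ(tr z) equals q·Λ(√δ), where tr is the trace from E to F_q. -/
/-- For a nontrivial additive character `ψ` of `F_q` and a character `Λ` of `E^×`
(`E = F_{q²} = F_q(√δ)`) trivial on `F_q^×` with `Λ² ≠ 1`, the Gauss sum
`Γ(Λ, ψ∘tr) = ∑_{z ∈ E^×} Λ(z) ψ(tr z)` equals `q · Λ(√δ)`. -/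
theorem stmt2 (q : ℕ) (hq : IsPrimePow q) (hodd : Odd q)
    (F E : Type*) [Field F] [Fintype F] [Field E] [Fintype E] [Algebra F E]
    (hF : Fintype.card F = q) (hE : Fintype.card E = q ^ 2)
    (δ : F) (hδ : ¬ IsSquare δ) (sd : E) (hsd : sd ^ 2 = algebraMap F E δ)
    (tr : E → F) (htr : ∀ z : E, algebraMap F E (tr z) = z + z ^ q)
    (ψ : AddChar F ℂ) (hψ : ψ ≠ 1)
    (Λ : MulChar E ℂ)
    (hΛF : ∀ x : F, x ≠ 0 → Λ (algebraMap F E x) = 1)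
    (hΛ2 : Λ * Λ ≠ 1) :
    ∑ z : E, Λ z * ψ (tr z) = (q : ℂ) * Λ sd := by
  classical
  set A := algebraMap F E with hA
  have hAinj : Function.Injective A := (algebraMap F E).injective
  have hδ0 : δ ≠ 0 := fun h => hδ ⟨0, by rw [h, mul_zero]⟩
  have hsdF : ∀ c : F, sd ≠ A c := by
    intro c h
    refine hδ ⟨c, hAinj ?_⟩
    rw [← hsd, h, map_mul]; ring
  have hsd0 : sd ≠ 0 := by
    intro h
    exact hsdF 0 (by rw [h, map_zero])
  -- characteristic
  obtain ⟨p, n, hp, hn, hpn⟩ := hq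
  have hpp : p.Prime := hp.nat_prime
  have hq2 : 2 ≤ q := by
    calc 2 ≤ p := hpp.two_le
    _ = p ^ 1 := (pow_one p).symm
    _ ≤ p ^ n := Nat.pow_le_pow_right hpp.pos hn
    _ = q := hpn
  have hcharF : CharP F p := by
    have hr : CharP F (ringChar F) := ringChar.charP F
    obtain ⟨m, hrp, hcard⟩ := FiniteField.card F (ringChar F)
    have : p = ringChar F := by
      have hdvd : p ∣ ringChar F ^ (m : ℕ) := by
        rw [← hcard, hF, ← hpn]
        exact dvd_pow_self p hn.ne'
      exact (Nat.prime_dvd_prime_iff_eq hpp hrp).mp (hpp.dvd_of_dvd_pow hdvd)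
    rwa [this]
  haveI := hcharF
  haveI hcharE : CharP E p := charP_of_injective_algebraMap hAinj p
  have h2 : (2 : F) ≠ 0 := by
    intro h
    have hpd : p ∣ 2 := (CharP.cast_eq_zero_iff F p 2).mp h
    have hp2 : p = 2 := (Nat.prime_dvd_prime_iff_eq hpp Nat.prime_two).mp hpd
    have : 2 ∣ q := by
      rw [← hpn, hp2]; exact dvd_pow_self 2 hn.ne'
    rw [Nat.odd_iff] at hodd; omega
  have h2E : (2 : E) ≠ 0 := by
    have : A 2 = (2 : E) := by rw [map_ofNat]
    intro h
    exact h2 (hAinj (by rw [this, h, map_zero]))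
  haveI : Fact p.Prime := ⟨hpp⟩
  have hfrob : ∀ z w : E, (z + w) ^ q = z ^ q + w ^ q := by
    intro z w
    rw [← hpn]
    exact add_pow_char_pow (R := E) (p := p) (n := n) (x := z) (y := w)
  have hFq : ∀ x : F, x ^ q = x := fun x => by rw [← hF]; exact FiniteField.pow_card x
  have hAq : ∀ x : F, (A x) ^ q = A x := fun x => by rw [← map_pow, hFq]
  -- sd ^ q = - sd
  have hsdq : sd ^ q = -sd := by
    have hsq : (sd ^ q) ^ 2 = sd ^ 2 := by
      rw [← pow_mul, mul_comm q 2, pow_mul, hsd, ← map_pow, hFq]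
    rcases (Commute.all (sd ^ q) sd).sq_eq_sq_iff_eq_or_eq_neg.mp hsq with h | h
    · exfalso
      have h3 : A (tr sd) = 2 * sd := by rw [htr sd, h]; ring
      have h4 : sd = A (tr sd * (2 : F)⁻¹) := by
        rw [map_mul, h3, map_inv₀, map_ofNat]
        field_simp
      exact hsdF _ h4
    · exact h
  -- trace formula
  have htr2 : ∀ x y : F, tr (A x + A y * sd) = 2 * x := by
    intro x y
    apply hAinj
    rw [htr, hfrob, mul_pow, hAq, hAq, hsdq, map_mul, map_ofNat]
    ring
  -- the bijection (x, y) ↦ A x + A y * sd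
  have hfinj : Function.Injective (fun xy : F × F => A xy.1 + A xy.2 * sd) := by
    rintro ⟨x, y⟩ ⟨x', y'⟩ hxy
    simp only at hxy
    by_cases hyy : y = y'
    · subst hyy
      have hx : A x = A x' := by
        have := add_right_cancel hxy
        exact this
      exact Prod.ext (hAinj hx) rfl
    · exfalso
      have hne : A y' - A y ≠ 0 := sub_ne_zero.mpr fun h => hyy (hAinj h).symm
      have key : sd = A ((x - x') * (y' - y)⁻¹) := by
        rw [map_mul, map_sub, map_inv₀, map_sub]
        field_simp
        linear_combination -hxy
      exact hsdF _ key
  have hcard : Fintype.card (F × F) = Fintype.card E := by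
    rw [Fintype.card_prod, hF, hE, sq]
  have hfbij : Function.Bijective (fun xy : F × F => A xy.1 + A xy.2 * sd) :=
    (Fintype.bijective_iff_injective_and_card _).mpr ⟨hfinj, hcard⟩
  have hsum : ∀ g : E → ℂ, ∑ z : E, g z = ∑ x : F, ∑ y : F, g (A x + A y * sd) := by
    intro g
    calc ∑ z : E, g z = ∑ xy : F × F, g (A xy.1 + A xy.2 * sd) :=
          (Fintype.sum_bijective _ hfbij (fun xy : F × F => g (A xy.1 + A xy.2 * sd)) g
            (fun _ => rfl)).symm
      _ = ∑ x : F, ∑ y : F, g (A x + A y * sd) :=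
          Fintype.sum_prod_type (fun xy : F × F => g (A xy.1 + A xy.2 * sd))
  -- additive character facts
  have hprim : ψ.IsPrimitive := AddChar.IsPrimitive.of_ne_one hψ
  have hψsum : ∀ c : F, ∑ y : F, ψ (y * c) = if c = 0 then (q : ℂ) else 0 := by
    intro c
    rw [AddChar.sum_mulShift c hprim, hF]
    split_ifs <;> simp
  -- reindexing over nonzero y
  have hreindex : ∀ (g : F → ℂ) (y : F), y ≠ 0 → ∑ x : F, g x = ∑ t : F, g (t * y) := by
    intro g y hy
    exact (Fintype.sum_bijective (· * y) (mulRight_bijective₀ y hy) _ _ (fun t => rfl)).symm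
  have hΛfact : ∀ (t y : F), y ≠ 0 → Λ (A (t * y) + A y * sd) = Λ (A t + sd) := by
    intro t y hy
    have h : A (t * y) + A y * sd = A y * (A t + sd) := by rw [map_mul]; ring
    rw [h, map_mul, hΛF y hy, one_mul]
  -- Λ is nontrivial
  have hΛ1 : Λ ≠ 1 := fun h => hΛ2 (by rw [h, one_mul])
  -- the sum S = ∑ t, Λ (A t + sd) equals -1
  set S : ℂ := ∑ t : F, Λ (A t + sd) with hSdef
  have hΛA : ∑ x : F, Λ (A x) = (q : ℂ) - 1 := by
    have h1 : ∀ x : F, Λ (A x) = 1 - (if x = 0 then 1 else 0) := by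
      intro x
      by_cases hx : x = 0
      · simp [hx, MulChar.map_zero]
      · simp [hx, hΛF x hx]
    rw [Finset.sum_congr rfl (fun x _ => h1 x), Finset.sum_sub_distrib, Finset.sum_const,
      Finset.sum_ite_eq' Finset.univ (0 : F) (fun _ => (1 : ℂ))]
    simp [hF]
  have hSy : ∀ y : F, y ≠ 0 → ∑ x : F, Λ (A x + A y * sd) = S := by
    intro y hy
    rw [hreindex (fun x => Λ (A x + A y * sd)) y hy]
    exact Finset.sum_congr rfl fun t _ => hΛfact t y hy
  have hS : S = -1 := by
    have hzero : ∑ z : E, (Λ z : ℂ) = 0 := MulChar.sum_eq_zero_of_ne_one hΛ1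
    have hzero' : ∑ y : F, ∑ x : F, Λ (A x + A y * sd) = 0 := by
      rw [← Finset.sum_comm, ← hsum (fun z => Λ z)]
      exact hzero
    rw [← Finset.sum_erase_add _ _ (Finset.mem_univ (0 : F))] at hzero'
    have he : ∑ y ∈ Finset.univ.erase (0 : F), ∑ x : F, Λ (A x + A y * sd)
        = ((q : ℂ) - 1) * S := by
      rw [Finset.sum_congr rfl (fun y hy => hSy y (Finset.ne_of_mem_erase hy)),
        Finset.sum_const, Finset.card_erase_of_mem (Finset.mem_univ _), Finset.card_univ, hF,
        nsmul_eq_mul, Nat.cast_sub (by omega : 1 ≤ q), Nat.cast_one]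
    have h0 : ∑ x : F, Λ (A x + A (0 : F) * sd) = (q : ℂ) - 1 := by
      simp only [map_zero, zero_mul, add_zero]
      exact hΛA
    rw [he, h0] at hzero'
    have hqne : (q : ℂ) - 1 ≠ 0 := by
      have : (q : ℂ) ≠ 1 := by
        intro h
        have : q = 1 := Nat.cast_eq_one.mp h
        omega
      exact sub_ne_zero.mpr this
    have hfac : ((q : ℂ) - 1) * (S + 1) = 0 := by linear_combination hzero'
    rcases mul_eq_zero.mp hfac with h | h
    · exact absurd h hqne
    · linear_combination h
  -- main computation
  rw [hsum (fun z => Λ z * ψ (tr z))]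
  simp only [htr2]
  rw [Finset.sum_comm]
  rw [← Finset.sum_erase_add _ _ (Finset.mem_univ (0 : F))]
  have hterm0 : ∑ x : F, Λ (A x + A (0 : F) * sd) * ψ (2 * x) = -1 := by
    simp only [map_zero, zero_mul, add_zero]
    have h1 : ∀ x : F, Λ (A x) * ψ (2 * x) = ψ (x * 2) - (if x = 0 then 1 else 0) := by
      intro x
      by_cases hx : x = 0
      · simp [hx, MulChar.map_zero]
      · rw [hΛF x hx, if_neg hx, one_mul, mul_comm, sub_zero]
    rw [Finset.sum_congr rfl (fun x _ => h1 x), Finset.sum_sub_distrib,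
      hψsum 2, if_neg h2, Finset.sum_ite_eq' Finset.univ (0 : F) (fun _ => (1 : ℂ))]
    simp
  have hGy : ∀ y : F, y ≠ 0 → ∑ x : F, Λ (A x + A y * sd) * ψ (2 * x)
      = ∑ t : F, Λ (A t + sd) * ψ (2 * (t * y)) := by
    intro y hy
    rw [hreindex (fun x => Λ (A x + A y * sd) * ψ (2 * x)) y hy]
    exact Finset.sum_congr rfl fun t _ => by rw [hΛfact t y hy]
  rw [Finset.sum_congr rfl (fun y hy => hGy y (Finset.ne_of_mem_erase hy))]
  rw [Finset.sum_comm]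
  have hinner : ∀ t : F, ∑ y ∈ Finset.univ.erase (0 : F), Λ (A t + sd) * ψ (2 * (t * y))
      = Λ (A t + sd) * ((if t = 0 then (q : ℂ) else 0) - 1) := by
    intro t
    rw [← Finset.mul_sum]
    congr 1
    have h3 : ∑ y ∈ Finset.univ.erase (0 : F), ψ (2 * (t * y))
        = (∑ y : F, ψ (2 * (t * y))) - ψ (2 * (t * 0)) := by
      rw [← Finset.sum_erase_add _ _ (Finset.mem_univ (0 : F))]; ring
    have h4 : ∑ y : F, ψ (2 * (t * y)) = if t = 0 then (q : ℂ) else 0 := by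
      have h5 : ∑ y : F, ψ (2 * (t * y)) = ∑ y : F, ψ (y * (2 * t)) :=
        Finset.sum_congr rfl fun y _ => by rw [show 2 * (t * y) = y * (2 * t) by ring]
      rw [h5, hψsum (2 * t)]
      by_cases ht : t = 0
      · simp [ht]
      · rw [if_neg (mul_ne_zero h2 ht), if_neg ht]
    rw [h3, h4]
    simp
  rw [Finset.sum_congr rfl (fun t _ => hinner t)]
  have hsplit : ∀ t : F, Λ (A t + sd) * ((if t = 0 then (q : ℂ) else 0) - 1)
      = (if t = 0 then Λ (A t + sd) * (q : ℂ) else 0) - Λ (A t + sd) := by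
    intro t
    by_cases ht : t = 0 <;> simp [ht] <;> ring
  rw [Finset.sum_congr rfl (fun t _ => hsplit t), Finset.sum_sub_distrib,
    Finset.sum_ite_eq' Finset.univ (0 : F) (fun t => Λ (A t + sd) * (q : ℂ)), ← hSdef, hS,
    hterm0]
  simp only [Finset.mem_univ, if_true, map_zero, zero_add]
  ring
end

section
/- Let q be an odd prime power, G = PGL_2(F_q), A the split torus of order q-1, and c ∈ F_q with c ≠ 1 and c ≠ δ (δ a fixed nonsquare). The double coset A_c = A·[[1,δ-c],[1,1-c]]·A is the disjoint union of the q-1 right cosets [[x, x(δ-c)],[1, 1-c]]·A for x ∈ F_q^×. -/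
open scoped MatrixGroups Pointwise

/-- `PGL₂(F) = GL₂(F)` modulo its center. -/
abbrev PGL2 (F : Type*) [Field F] : Type _ :=
  GL (Fin 2) F ⧸ Subgroup.center (GL (Fin 2) F)

/-- The canonical projection `GL₂(F) → PGL₂(F)`. -/
def pglProj (F : Type*) [Field F] : GL (Fin 2) F →* PGL2 F :=
  QuotientGroup.mk' _

/-- The subset of `PGL₂(F)` of classes of invertible matrices `!![y, x; z, w]`. -/
def pglSet (F : Type*) [Field F] (y x z w : F) : Set (PGL2 F) :=
  {g | ∃ M : GL (Fin 2) F,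
    (↑M : Matrix (Fin 2) (Fin 2) F) = !![y, x; z, w] ∧ g = pglProj F M}

/-- The image in `PGL₂(F)` of the diagonal split torus `A`. -/
def setA (F : Type*) [Field F] : Set (PGL2 F) :=
  {g | ∃ y : F, y ≠ 0 ∧ g ∈ pglSet F y 0 0 1}

/-!
The double coset is computed entrywise: `pglSet F y x z w` is the (at most one-point) set of
classes of the matrix `!![y, x; z, w]`, products of such sets are classes of matrix products, and
multiplying by the torus on the left (right) scales the rows (columns). The right cosets
`!![x, x(δ-c); 1, 1-c]·A` are told apart by the scalar relating two representatives, which the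
entry `1 - c ≠ 0` forces to be `1`.
-/

section

open Matrix

variable {F : Type*} [Field F] {g g' : PGL2 F} {y x z w y' x' z' w' : F}

lemma det_ne_zero_of_mem_pglSet (hg : g ∈ pglSet F y x z w) : y * w - x * z ≠ 0 := by
  obtain ⟨M, hM, -⟩ := hg
  simpa [GeneralLinearGroup.val_det_apply, hM, det_fin_two_of] using
    (GeneralLinearGroup.det M).ne_zero

lemma pglSet_nonempty (h : y * w - x * z ≠ 0) : (pglSet F y x z w).Nonempty :=
  ⟨_, GeneralLinearGroup.mkOfDetNeZero !![y, x; z, w] (by rwa [det_fin_two_of]),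
    GeneralLinearGroup.val_mkOfDetNeZero _ _, rfl⟩

lemma pglSet_subsingleton : (pglSet F y x z w).Subsingleton := by
  rintro _ ⟨M, hM, rfl⟩ _ ⟨M', hM', rfl⟩
  rw [Units.ext (hM.trans hM'.symm)]

lemma mul_mem_pglSet (hg : g ∈ pglSet F y x z w) (hg' : g' ∈ pglSet F y' x' z' w') :
    g * g' ∈ pglSet F (y * y' + x * z') (y * x' + x * w') (z * y' + w * z') (z * x' + w * w') := by
  obtain ⟨M, hM, rfl⟩ := hg
  obtain ⟨M', hM', rfl⟩ := hg'
  exact ⟨M * M', by rw [Units.val_mul, hM, hM', mul_fin_two], (map_mul _ _ _).symm⟩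

lemma pglSet_mul_pglSet :
    pglSet F y x z w * pglSet F y' x' z' w' =
      pglSet F (y * y' + x * z') (y * x' + x * w') (z * y' + w * z') (z * x' + w * w') := by
  refine subset_antisymm (Set.mul_subset_iff.mpr fun _ hg _ hg' => mul_mem_pglSet hg hg') ?_
  intro g hg
  have hdet : (y * w - x * z) * (y' * w' - x' * z') ≠ 0 := by
    convert det_ne_zero_of_mem_pglSet hg using 1
    ring
  obtain ⟨h, h'⟩ := mul_ne_zero_iff.mp hdet
  obtain ⟨a, ha⟩ := pglSet_nonempty h
  obtain ⟨b, hb⟩ := pglSet_nonempty h'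
  rw [pglSet_subsingleton hg (mul_mem_pglSet ha hb)]
  exact Set.mul_mem_mul ha hb

lemma setA_eq_iUnion : setA F = ⋃ t : Fˣ, pglSet F t 0 0 1 := by
  ext g
  simp only [setA, Set.mem_ofPred_eq, Set.mem_iUnion]
  exact ⟨fun ⟨t, ht, hg⟩ => ⟨Units.mk0 t ht, hg⟩, fun ⟨t, hg⟩ => ⟨t, t.ne_zero, hg⟩⟩

lemma setA_mul_pglSet :
    setA F * pglSet F y x z w = ⋃ t : Fˣ, pglSet F (t * y) (t * x) z w := by
  simp only [setA_eq_iUnion, Set.iUnion_mul, pglSet_mul_pglSet, zero_mul, add_zero, one_mul,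
    zero_add]

lemma pglSet_mul_setA :
    pglSet F y x z w * setA F = ⋃ t : Fˣ, pglSet F (y * t) x (z * t) w := by
  simp only [setA_eq_iUnion, Set.mul_iUnion, pglSet_mul_pglSet, mul_zero, add_zero, mul_one,
    zero_add]

lemma exists_scalar_of_mem_pglSet (hg : g ∈ pglSet F y x z w) (hg' : g ∈ pglSet F y' x' z' w') :
    ∃ a : F, y * a = y' ∧ x * a = x' ∧ z * a = z' ∧ w * a = w' := by
  obtain ⟨M, hM, rfl⟩ := hg
  obtain ⟨M', hM', hMM'⟩ := hg'
  obtain ⟨u, hu⟩ := ProjGenLinGroup.mk_eq_mk_iff.mp hMM'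
  have hmat := congrArg Units.val hu
  exact ⟨u, by simpa [hM, hM', ← Matrix.ext_iff, Fin.forall_fin_two, and_assoc] using hmat⟩

lemma disjoint_pglSet_mul_setA {b : F} (hw : w ≠ 0) (hxx' : x ≠ x') :
    Disjoint (pglSet F x (x * b) 1 w * setA F) (pglSet F x' (x' * b) 1 w * setA F) := by
  rw [pglSet_mul_setA, pglSet_mul_setA, Set.disjoint_left]
  simp only [Set.mem_iUnion, one_mul]
  rintro g ⟨t, hg⟩ ⟨t', hg'⟩
  obtain ⟨a, hxa, -, hta, hwa⟩ := exists_scalar_of_mem_pglSet hg hg'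
  obtain rfl : a = 1 := mul_left_cancel₀ hw (hwa.trans (mul_one w).symm)
  rw [mul_one] at hxa hta
  rw [← hta] at hxa
  exact hxx' (mul_right_cancel₀ t.ne_zero hxa)

end

theorem stmt8_general (F : Type*) [Field F] (δ : F) (c : F) (hc1 : c ≠ 1) :
    setA F * pglSet F 1 (δ - c) 1 (1 - c) * setA F
      = (⋃ x : Fˣ, pglSet F (x : F) ((x : F) * (δ - c)) 1 (1 - c) * setA F) ∧
    (Set.univ : Set Fˣ).PairwiseDisjoint
      (fun x : Fˣ => pglSet F (x : F) ((x : F) * (δ - c)) 1 (1 - c) * setA F) := by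
  refine ⟨?_, fun x _ x' _ hxx' => ?_⟩
  · rw [setA_mul_pglSet, Set.iUnion_mul]
    simp only [mul_one]
  · exact disjoint_pglSet_mul_setA (sub_ne_zero.mpr hc1.symm) (Units.val_injective.ne hxx')

/-- For `c ≠ 1, δ`, the double coset `A_c = A·!![1, δ-c; 1, 1-c]·A` is the disjoint union of
the `q-1` right cosets `!![x, x(δ-c); 1, 1-c]·A`, `x ∈ F_q^×`. -/
theorem stmt8 (q : ℕ) (hq : IsPrimePow q) (hodd : Odd q)
    (F : Type*) [Field F] [Fintype F] (hF : Fintype.card F = q)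
    (δ : F) (hδ : ¬ IsSquare δ) (c : F) (hc1 : c ≠ 1) (hcδ : c ≠ δ) :
    setA F * pglSet F 1 (δ - c) 1 (1 - c) * setA F
      = (⋃ x : Fˣ, pglSet F (x : F) ((x : F) * (δ - c)) 1 (1 - c) * setA F) ∧
    (Set.univ : Set Fˣ).PairwiseDisjoint
      (fun x : Fˣ => pglSet F (x : F) ((x : F) * (δ - c)) 1 (1 - c) * setA F) :=
  stmt8_general F δ c hc1
end

section
/- Let q be an odd prime power, G = PGL_2(F_q), K the nonsplit torus of order q+1 embedded via F_{q^2}^×/F_q^× using a nonsquare δ. For c ∈ F_q with c ≠ ±1, the double coset K·s·K with s = [[y, δx],[0,1]] (any solution of (y+c)^2 - δx^2 = c^2-1) is the disjoint union of the q+1 right cosets [[y, δx],[0,1]]·K, one for each solution (y,x) ∈ F_q^2 of (y+c)^2 - δx^2 = c^2-1; in particular the conic (y+c)^2 - δx^2 = c^2-1 has exactly q+1 points over F_q when c ≠ ±1. -/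
open scoped MatrixGroups Pointwise

/-- The image `K` in `PGL₂(F)` of the nonsplit torus `{!![b, aδ; a, b] : (a,b) ≠ (0,0)}`. -/
def setK (F : Type*) [Field F] (δ : F) : Set (PGL2 F) :=
  {g | ∃ a b : F, ∃ M : GL (Fin 2) F,
    (↑M : Matrix (Fin 2) (Fin 2) F) = !![b, a * δ; a, b] ∧ g = pglProj F M}

/-!
Identify `F²` with `E = QuadraticAlgebra F δ 0 = F(√δ)` via the basis `1, ω`. Every matrix is
then `z ↦ α z + β z̄` for a unique pair `(α, β)`, the torus `K` acts by multiplication by `E^×`,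
and `k₁ (α, β) k₂ = (k₁ α k₂, k₁ β k̄₂)`. Hence the ratio `N α : N β` is a bi-`K`-invariant, and
by Hilbert 90 (every norm-one `w` is `u / ū`) pairs with the same ratio lie in one double coset.
For `!![y, δx; 0, 1]` one has `α = ((y+1) + xω)/2`, `β = ((y-1) - xω)/2`, and the ratio is
`(c-1) : (c+1)` exactly on the conic. Every invertible matrix is uniquely `!![y, δx; 0, 1]` times
a torus element, read off from the bottom row; this gives the decomposition of the double coset
and its disjointness.

The conic is the norm fibre `N z = c² - 1`, `z = (y + c) + xω`, which is in bijection with the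
norm-one elements; by Hilbert 90 these are `-1` and the Cayley transforms `(1 + tω)/(1 - tω)`,
`t ∈ F`, so there are `q + 1` of them.
-/

namespace QuadraticAlgebra

section CommRing

variable {R : Type*} [CommRing R] {d : R}

/-- The matrix of `z ↦ α * z + β * star z` on `QuadraticAlgebra R d 0` in the basis `1, ω`. -/
def linMatrix (α β : QuadraticAlgebra R d 0) : Matrix (Fin 2) (Fin 2) R :=
  !![α.re + β.re, d * (α.im - β.im); α.im + β.im, α.re - β.re]

theorem linMatrix_mul (α β α' β' : QuadraticAlgebra R d 0) :
    linMatrix α β * linMatrix α' β' =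
      linMatrix (α * α' + β * star β') (α * β' + β * star α') := by
  ext i j
  fin_cases i <;> fin_cases j <;> simp [linMatrix, Matrix.mul_apply] <;> ring

theorem det_linMatrix (α β : QuadraticAlgebra R d 0) :
    (linMatrix α β).det = norm α - norm β := by
  simp only [linMatrix, Matrix.det_fin_two_of, norm_def, zero_mul, add_zero]
  ring

theorem linMatrix_mk_zero (b a : R) :
    linMatrix ⟨b, a⟩ (0 : QuadraticAlgebra R d 0) = !![b, a * d; a, b] := by
  simp [linMatrix, mul_comm]

end CommRing

section Field

variable {K : Type*} [Field K] {d : K}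

theorem fact_of_not_isSquare (hd : ¬IsSquare d) : Fact (∀ r : K, r ^ 2 ≠ d + 0 * r) :=
  ⟨fun r h => hd ⟨r, by linear_combination -h⟩⟩

theorem exists_norm_eq [Fintype K] (hK : Fintype.card K % 2 = 1) (hd : d ≠ 0) (n : K) :
    ∃ z : QuadraticAlgebra K d 0, norm z = n := by
  open Polynomial in
  obtain ⟨a, b, hab⟩ := FiniteField.exists_root_sum_quadratic
    (degree_quadratic (one_ne_zero : (1 : K) ≠ 0) (b := 0) (c := 0))
    (degree_quadratic (neg_ne_zero.mpr hd) (b := 0) (c := -n)) hK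
  refine ⟨⟨a, b⟩, ?_⟩
  simp only [eval_add, eval_mul, eval_pow, eval_C, eval_X] at hab
  rw [norm_def]
  linear_combination hab

theorem mk_one_ne_zero (t : K) : (⟨1, t⟩ : QuadraticAlgebra K d 0) ≠ 0 := fun h => by
  simpa using congrArg re h

theorem linMatrix_inj (h2 : (2 : K) ≠ 0) (hd : d ≠ 0) {α β α' β' : QuadraticAlgebra K d 0} :
    linMatrix α β = linMatrix α' β' ↔ α = α' ∧ β = β' := by
  refine ⟨fun h => ?_, fun h => by rw [h.1, h.2]⟩
  have e00 : α.re + β.re = α'.re + β'.re := congrFun (congrFun h 0) 0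
  have e01 : α.im - β.im = α'.im - β'.im := mul_left_cancel₀ hd (congrFun (congrFun h 0) 1)
  have e10 : α.im + β.im = α'.im + β'.im := congrFun (congrFun h 1) 0
  have e11 : α.re - β.re = α'.re - β'.re := congrFun (congrFun h 1) 1
  constructor <;> ext <;> apply mul_left_cancel₀ h2
  · linear_combination e00 + e11
  · linear_combination e10 + e01
  · linear_combination e00 - e11
  · linear_combination e10 - e01

def upperFst (y x : K) : QuadraticAlgebra K d 0 := ⟨(y + 1) / 2, x / 2⟩

def upperSnd (y x : K) : QuadraticAlgebra K d 0 := ⟨(y - 1) / 2, -x / 2⟩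

theorem linMatrix_upperFst_upperSnd (h2 : (2 : K) ≠ 0) (y x : K) :
    linMatrix (upperFst (d := d) y x) (upperSnd y x) = !![y, d * x; 0, 1] := by
  obtain ⟨h00, h01, h10, h11⟩ : (y + 1) / 2 + (y - 1) / 2 = y ∧ x / 2 - -x / 2 = x ∧
      x / 2 + -x / 2 = 0 ∧ (y + 1) / 2 - (y - 1) / 2 = 1 := by
    refine ⟨?_, ?_, ?_, ?_⟩ <;> field_simp <;> ring
  rw [linMatrix, upperFst, upperSnd, h00, h01, h10, h11]

theorem upperFst_ne_zero_or_upperSnd_ne_zero (h2 : (2 : K) ≠ 0) (y x : K) :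
    upperFst (d := d) y x ≠ 0 ∨ upperSnd (d := d) y x ≠ 0 := by
  by_contra! h
  have hα := congrArg re h.1
  have hβ := congrArg re h.2
  simp only [upperFst, upperSnd, re_zero, div_eq_zero_iff, h2, or_false] at hα hβ
  exact h2 (by linear_combination hα - hβ)

theorem conic_iff_norm (h2 : (2 : K) ≠ 0) {c y x : K} :
    (y + c) ^ 2 - d * x ^ 2 = c ^ 2 - 1 ↔
      (1 + c) * norm (upperFst (d := d) y x) + (1 - c) * norm (upperSnd (d := d) y x) = 0 := by
  have : (1 + c) * norm (upperFst (d := d) y x) + (1 - c) * norm (upperSnd (d := d) y x) =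
      ((y + c) ^ 2 - d * x ^ 2 - (c ^ 2 - 1)) / 2 := by
    simp only [upperFst, upperSnd, norm_def, zero_mul, add_zero]
    field_simp
    ring
  rw [this, div_eq_zero_iff, sub_eq_zero, or_iff_left h2]

def conicEquiv (d c n : K) :
    {p : K × K // (p.1 + c) ^ 2 - d * p.2 ^ 2 = n} ≃
      {z : QuadraticAlgebra K d 0 // norm z = n} where
  toFun p := ⟨⟨p.1.1 + c, p.1.2⟩, by rw [norm_def]; linear_combination p.2⟩
  invFun z := ⟨(z.1.re - c, z.1.im), by
    show (z.1.re - c + c) ^ 2 - d * z.1.im ^ 2 = n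
    linear_combination (norm_def z.1).symm.trans z.2⟩
  left_inv p := by simp
  right_inv z := by simp

section NoSquareRoot

variable [Fact (∀ r : K, r ^ 2 ≠ d + 0 * r)]

variable (K d) in
theorem ne_zero_of_fact : d ≠ 0 :=
  fun h => (Fact.out : ∀ r : K, r ^ 2 ≠ d + 0 * r) 0 (by simp [h])

theorem norm_ne_zero {u : QuadraticAlgebra K d 0} (hu : u ≠ 0) : norm u ≠ 0 :=
  norm_eq_zero_iff_eq_zero.not.mpr hu

theorem norm_div (a b : QuadraticAlgebra K d 0) : norm (a / b) = norm a / norm b := by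
  rcases eq_or_ne b 0 with rfl | hb
  · simp
  · rw [eq_div_iff (norm_ne_zero hb), ← map_mul, div_mul_cancel₀ _ hb]

theorem exists_eq_mul_star_of_norm_eq_one {w : QuadraticAlgebra K d 0} (hw : norm w = 1) :
    ∃ u ≠ 0, u = w * star u := by
  by_cases hw1 : w = -1
  · refine ⟨ω, fun h => by simpa using congrArg im h, ?_⟩
    ext <;> simp [hw1]
  · refine ⟨1 + w, fun h => hw1 (eq_neg_of_add_eq_zero_right h), ?_⟩
    have : w * star w = 1 := by rw [← algebraMap_norm_eq_mul_star, hw, map_one]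
    rw [star_add, star_one, mul_add, mul_one, this, add_comm]

theorem exists_mul_mul_eq_of_norm_mul_norm_eq {α β α' β' : QuadraticAlgebra K d 0}
    (hα : α ≠ 0) (hβ' : β' ≠ 0) (h : norm α * norm β' = norm α' * norm β) :
    ∃ k₁ k₂ : QuadraticAlgebra K d 0,
      k₁ ≠ 0 ∧ k₂ ≠ 0 ∧ k₁ * α * k₂ = α' ∧ k₁ * β * star k₂ = β' := by
  have hN : norm α * norm β' ≠ 0 := mul_ne_zero (norm_ne_zero hα) (norm_ne_zero hβ')
  have hα' : α' ≠ 0 := by rintro rfl; simp [h] at hN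
  have hβ : β ≠ 0 := by rintro rfl; simp [h] at hN
  -- Writing the norm-one element `α' β / (α β')` as `u / ū`, take `k₂ = u`, `k₁ = α' / (α u)`.
  obtain ⟨u, hu, hwu⟩ := exists_eq_mul_star_of_norm_eq_one (w := α' * β / (α * β'))
    (by rw [norm_div, map_mul, map_mul, h, div_self (h ▸ hN)])
  refine ⟨α' / (α * u), u, div_ne_zero hα' (mul_ne_zero hα hu), hu, by field_simp, ?_⟩
  rw [div_mul_eq_mul_div, eq_div_iff (mul_ne_zero hα hβ')] at hwu
  field_simp
  linear_combination -hwu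

theorem ne_zero_of_conic {c y x : K} (hp : (y + c) ^ 2 - d * x ^ 2 = c ^ 2 - 1) : y ≠ 0 := by
  rintro rfl
  have hx : x ≠ 0 := by
    rintro rfl
    exact one_ne_zero (by linear_combination hp : (1 : K) = 0)
  refine (Fact.out : ∀ r : K, r ^ 2 ≠ d + 0 * r) x⁻¹ ?_
  field_simp
  linear_combination hp

theorem exists_mul_upperFst_mul_eq_of_conic (h2 : (2 : K) ≠ 0) {c y x Y X : K} (hc1 : c ≠ 1)
    (hc2 : c ≠ -1) (hp : (y + c) ^ 2 - d * x ^ 2 = c ^ 2 - 1)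
    (hp' : (Y + c) ^ 2 - d * X ^ 2 = c ^ 2 - 1) :
    ∃ k₁ k₂ : QuadraticAlgebra K d 0, k₁ ≠ 0 ∧ k₂ ≠ 0 ∧
      k₁ * upperFst y x * k₂ = upperFst Y X ∧ k₁ * upperSnd y x * star k₂ = upperSnd Y X := by
  rw [conic_iff_norm h2] at hp hp'
  have hc1' : 1 - c ≠ 0 := sub_ne_zero.mpr hc1.symm
  have hc2' : 1 + c ≠ 0 := fun h => hc2 (by linear_combination h)
  refine exists_mul_mul_eq_of_norm_mul_norm_eq ?_ ?_ (mul_left_cancel₀ hc2' ?_)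
  · exact fun h => (upperFst_ne_zero_or_upperSnd_ne_zero h2 y x).elim (· h) fun hβ =>
      hβ (norm_eq_zero_iff_eq_zero.mp (by simpa [h, hc1'] using hp))
  · exact fun h => (upperFst_ne_zero_or_upperSnd_ne_zero h2 Y X).elim
      (fun hα => hα (norm_eq_zero_iff_eq_zero.mp (by simpa [h, hc2'] using hp'))) (· h)
  · linear_combination norm (upperSnd (d := d) Y X) * hp - norm (upperSnd (d := d) y x) * hp'

variable (K d) in
def cayley : Option K → QuadraticAlgebra K d 0 :=
  fun o => o.elim (-1) fun t => ⟨1, t⟩ / star ⟨1, t⟩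

theorem norm_cayley (o : Option K) : norm (cayley K d o) = 1 := by
  cases o with
  | none => simp [cayley]
  | some t =>
    rw [cayley, Option.elim, norm_div, norm_star, div_self (norm_ne_zero (mk_one_ne_zero t))]

theorem cayley_some_ne_neg_one (h2 : (2 : K) ≠ 0) (t : K) : cayley K d (some t) ≠ -1 := by
  rw [cayley, Option.elim, Ne, div_eq_iff (star_ne_zero.mpr (mk_one_ne_zero t))]
  intro h
  have h := congrArg re h
  simp only [star_mk, zero_mul, add_zero, neg_mul, one_mul, neg_mk, neg_neg] at h
  exact h2 (by linear_combination h)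

theorem cayley_injective (h2 : (2 : K) ≠ 0) : Function.Injective (cayley K d) := by
  rintro (_ | s) (_ | t) h
  · rfl
  · exact absurd h.symm (cayley_some_ne_neg_one h2 t)
  · exact absurd h (cayley_some_ne_neg_one h2 s)
  · rw [cayley, cayley, Option.elim, Option.elim, div_eq_div_iff (star_ne_zero.mpr
      (mk_one_ne_zero s)) (star_ne_zero.mpr (mk_one_ne_zero t))] at h
    have h := congrArg im h
    simp only [star_mk, zero_mul, add_zero, mk_mul_mk, mul_one, mul_neg, one_mul, neg_zero] at h
    rw [mul_left_cancel₀ h2 (by linear_combination h : (2 : K) * s = 2 * t)]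

theorem mem_range_cayley_of_norm_eq_one {w : QuadraticAlgebra K d 0} (hw : norm w = 1) :
    w ∈ Set.range (cayley K d) := by
  obtain ⟨u, hu0, hu⟩ := exists_eq_mul_star_of_norm_eq_one hw
  by_cases hre : u.re = 0
  · refine ⟨none, ?_⟩
    have hstar : star u = -u := by ext <;> simp [hre]
    rw [hstar, mul_neg, eq_neg_iff_add_eq_zero, ← one_add_mul, mul_comm, add_comm] at hu
    exact (eq_neg_of_add_eq_zero_left ((mul_eq_zero.mp hu).resolve_left hu0)).symm
  · refine ⟨some (u.im / u.re), ?_⟩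
    set v : QuadraticAlgebra K d 0 := ⟨1, u.im / u.re⟩
    have hv : u = u.re • v := by ext <;> simp [v, mul_div_cancel₀ _ hre]
    have hv' : star u = u.re • star v := by ext <;> simp [v, mul_div_cancel₀ _ hre]
    rw [hv', mul_smul_comm] at hu
    nth_rw 1 [hv] at hu
    rw [cayley, Option.elim, div_eq_iff (star_ne_zero.mpr (mk_one_ne_zero _))]
    exact smul_right_injective _ hre hu

theorem card_norm_eq_one [Finite K] (h2 : (2 : K) ≠ 0) :
    Nat.card {w : QuadraticAlgebra K d 0 // norm w = 1} = Nat.card K + 1 := by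
  rw [← Finite.card_option]
  refine (Nat.card_congr (Equiv.ofBijective (fun o => ⟨cayley K d o, norm_cayley o⟩)
    ⟨fun o o' h => cayley_injective h2 (congrArg Subtype.val h), ?_⟩)).symm
  rintro ⟨w, hw⟩
  obtain ⟨o, ho⟩ := mem_range_cayley_of_norm_eq_one hw
  exact ⟨o, Subtype.ext ho⟩

theorem card_norm_eq {n : K} {z₀ : QuadraticAlgebra K d 0} (hz₀ : norm z₀ = n) (hn : n ≠ 0) :
    Nat.card {z : QuadraticAlgebra K d 0 // norm z = n} =
      Nat.card {w : QuadraticAlgebra K d 0 // norm w = 1} := by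
  have hz₀' : z₀ ≠ 0 := by rintro rfl; simp [← hz₀] at hn
  exact Nat.card_congr
    { toFun z := ⟨z / z₀, by rw [norm_div, z.2, hz₀, div_self hn]⟩
      invFun w := ⟨w * z₀, by rw [map_mul, w.2, one_mul, hz₀]⟩
      left_inv z := Subtype.ext (div_mul_cancel₀ _ hz₀')
      right_inv w := Subtype.ext (mul_div_cancel_right₀ _ hz₀') }

theorem card_conic [Fintype K] [DecidableEq K] (hK : Fintype.card K % 2 = 1) {c : K}
    (hc1 : c ≠ 1) (hc2 : c ≠ -1) :
    (Finset.univ.filter fun p : K × K => (p.1 + c) ^ 2 - d * p.2 ^ 2 = c ^ 2 - 1).card =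
      Fintype.card K + 1 := by
  have h2 : (2 : K) ≠ 0 := Ring.two_ne_zero (mt FiniteField.even_card_iff_char_two.mp (by omega))
  have hn : c ^ 2 - 1 ≠ 0 := fun h => by
    rcases mul_eq_zero.mp (show (c - 1) * (c + 1) = 0 by linear_combination h) with h | h
    · exact hc1 (sub_eq_zero.mp h)
    · exact hc2 (eq_neg_of_add_eq_zero_left h)
  obtain ⟨z₀, hz₀⟩ := exists_norm_eq hK (ne_zero_of_fact K d) (c ^ 2 - 1)
  rw [← Fintype.card_subtype, ← Nat.card_eq_fintype_card, ← Nat.card_eq_fintype_card,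
    Nat.card_congr (conicEquiv d c _), card_norm_eq hz₀ hn, card_norm_eq_one h2]

end NoSquareRoot

end Field

end QuadraticAlgebra

namespace NonsplitTorus

open QuadraticAlgebra

section CommRing

variable {R : Type*} [CommRing R]

def torus (d : R) : Submonoid (GL (Fin 2) R) where
  carrier := {M | ∃ k : QuadraticAlgebra R d 0, (M : Matrix (Fin 2) (Fin 2) R) = linMatrix k 0}
  mul_mem' := by
    rintro M N ⟨k, hk⟩ ⟨l, hl⟩
    exact ⟨k * l, by simp [hk, hl, linMatrix_mul]⟩
  one_mem' := ⟨1, by ext i j; fin_cases i <;> fin_cases j <;> simp [linMatrix]⟩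

def upperSet (d y x : R) : Set (GL (Fin 2) R) :=
  {M | (M : Matrix (Fin 2) (Fin 2) R) = !![y, d * x; 0, 1]}

theorem center_subset_torus (d : R) :
    (Subgroup.center (GL (Fin 2) R) : Set (GL (Fin 2) R)) ⊆ torus d := by
  intro z hz
  obtain ⟨a, ha⟩ := Matrix.GeneralLinearGroup.mem_center_iff_val_mem_range_scalar.mp hz
  refine ⟨⟨a, 0⟩, ?_⟩
  rw [← ha]
  ext i j
  fin_cases i <;> fin_cases j <;> simp [linMatrix]

end CommRing

variable {K : Type*} [Field K] {d : K}

theorem setK_eq_image (d : K) : setK K d = pglProj K '' torus d := by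
  ext g
  constructor
  · rintro ⟨a, b, M, hM, rfl⟩
    exact ⟨M, ⟨⟨b, a⟩, by rw [hM, linMatrix_mk_zero]⟩, rfl⟩
  · rintro ⟨M, ⟨k, hk⟩, rfl⟩
    exact ⟨k.im, k.re, M, by rw [hk, ← linMatrix_mk_zero], rfl⟩

theorem pglSet_eq_image (d y x : K) : pglSet K y (d * x) 0 1 = pglProj K '' upperSet d y x := by
  ext g
  simp [pglSet, upperSet, eq_comm]

theorem mem_mul_torus_of_pglProj_eq {U : Set (GL (Fin 2) K)} {M N : GL (Fin 2) K}
    (hN : N ∈ U * torus d) (h : pglProj K N = pglProj K M) : M ∈ U * torus d := by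
  obtain ⟨S, hS, T, hT, rfl⟩ := hN
  have hz : (S * T)⁻¹ * M ∈ torus d :=
    center_subset_torus d (QuotientGroup.eq.mp h)
  exact ⟨S, hS, T * ((S * T)⁻¹ * M), (torus d).mul_mem hT hz, by group⟩

theorem eq_of_mem_upperSet_mul_torus (hd : d ≠ 0) {M : GL (Fin 2) K} {y x y' x' : K}
    (h : M ∈ upperSet d y x * torus d) (h' : M ∈ upperSet d y' x' * torus d) :
    y = y' ∧ x = x' := by
  obtain ⟨S, hS, T, ⟨k, hk⟩, rfl⟩ := h
  obtain ⟨S', hS', T', ⟨k', hk'⟩, hM⟩ := h'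
  rw [upperSet, Set.mem_ofPred_eq] at hS hS'
  have hT : T' = T := by
    have hM' := congrArg (fun A : GL (Fin 2) K => (A : Matrix (Fin 2) (Fin 2) K)) hM
    simp only [Units.val_mul, hS, hS', hk, hk'] at hM'
    have e10 := congrFun (congrFun hM' 1) 0
    have e11 := congrFun (congrFun hM' 1) 1
    simp only [linMatrix, Matrix.mul_apply, Fin.sum_univ_two, Matrix.of_apply, Matrix.cons_val',
      Matrix.cons_val_zero, Matrix.cons_val_one, Matrix.cons_val_fin_one, re_zero, im_zero,
      add_zero, sub_zero, zero_mul, one_mul, zero_add] at e10 e11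
    have hkk : k' = k := QuadraticAlgebra.ext e11 e10
    exact Units.ext (by rw [hk, hk', hkk])
  subst hT
  have hSS : (S : Matrix (Fin 2) (Fin 2) K) = S' := by rw [mul_right_cancel hM]
  rw [hS, hS'] at hSS
  exact ⟨congrFun (congrFun hSS 0) 0, mul_left_cancel₀ hd (congrFun (congrFun hSS 0) 1)⟩

theorem upper_mul_linMatrix_bottomRow_eq (hd : d ≠ 0) (N : Matrix (Fin 2) (Fin 2) K)
    (hD : N 1 1 ^ 2 - d * N 1 0 ^ 2 ≠ 0) :
    !![N.det / (N 1 1 ^ 2 - d * N 1 0 ^ 2),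
        d * ((N 0 1 * N 1 1 / d - N 0 0 * N 1 0) / (N 1 1 ^ 2 - d * N 1 0 ^ 2)); 0, 1] *
      linMatrix (⟨N 1 1, N 1 0⟩ : QuadraticAlgebra K d 0) 0 = N := by
  have hD' : N 1 1 ^ 2 - N 1 0 ^ 2 * d ≠ 0 := by rwa [mul_comm]
  have hD'' : -(N 1 0 ^ 2 * d) + N 1 1 ^ 2 ≠ 0 := by rwa [neg_add_eq_sub, mul_comm]
  ext i j
  fin_cases i <;> fin_cases j <;> simp [linMatrix, Matrix.det_fin_two] <;> field_simp <;> ring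

theorem exists_mem_upperSet_mul_torus [Fact (∀ r : K, r ^ 2 ≠ d + 0 * r)] (M : GL (Fin 2) K) :
    ∃ y x : K, M ∈ upperSet d y x * torus d := by
  have hd := ne_zero_of_fact K d
  have hdet := M.det_ne_zero
  set N := (M : Matrix (Fin 2) (Fin 2) K)
  set w : QuadraticAlgebra K d 0 := ⟨N 1 1, N 1 0⟩
  have hw : norm w ≠ 0 := norm_ne_zero fun h => hdet (by
    rw [Matrix.det_fin_two, show N 1 1 = 0 from congrArg re h, show N 1 0 = 0 from congrArg im h]
    ring)
  have hD : N 1 1 ^ 2 - d * N 1 0 ^ 2 ≠ 0 := by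
    convert hw using 1
    simp only [norm_def, zero_mul, add_zero, w]
    ring
  have hN := upper_mul_linMatrix_bottomRow_eq hd N hD
  have hdet' := hN.symm ▸ hdet
  rw [Matrix.det_mul] at hdet'
  exact ⟨_, _, .mkOfDetNeZero _ (left_ne_zero_of_mul hdet'), rfl,
    .mkOfDetNeZero _ (right_ne_zero_of_mul hdet'), ⟨w, rfl⟩, Units.ext hN⟩

theorem conic_of_mem_torus_mul_upperSet_mul_torus (h2 : (2 : K) ≠ 0) (hd : d ≠ 0) {c y x Y X : K}
    (hp : (y + c) ^ 2 - d * x ^ 2 = c ^ 2 - 1) {M : GL (Fin 2) K}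
    (hM : M ∈ (torus d : Set (GL (Fin 2) K)) * upperSet d y x * torus d)
    (hM' : M ∈ upperSet d Y X * torus d) :
    (Y + c) ^ 2 - d * X ^ 2 = c ^ 2 - 1 := by
  obtain ⟨_, ⟨T₁, ⟨k₁, hk₁⟩, S, hS, rfl⟩, T₂, ⟨k₂, hk₂⟩, rfl⟩ := hM
  obtain ⟨S', hS', T, ⟨w, hw⟩, hST⟩ := hM'
  have hNw : norm w ≠ 0 := by simpa [hw, det_linMatrix] using T.det_ne_zero
  rw [upperSet, Set.mem_ofPred_eq, ← linMatrix_upperFst_upperSnd h2] at hS hS'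
  have hmat := congrArg Units.val hST
  simp only [Units.val_mul, hk₁, hk₂, hS, hS', hw, linMatrix_mul, star_zero, mul_zero,
    zero_mul, add_zero, zero_add, linMatrix_inj h2 hd] at hmat
  rw [conic_iff_norm h2] at hp ⊢
  refine (mul_eq_zero.mp ?_).resolve_left hNw
  calc norm w * ((1 + c) * norm (upperFst (d := d) Y X) + (1 - c) * norm (upperSnd (d := d) Y X))
      = norm k₁ * norm k₂ * ((1 + c) * norm (upperFst (d := d) y x) +
          (1 - c) * norm (upperSnd (d := d) y x)) := by
        have hα := congrArg QuadraticAlgebra.norm hmat.1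
        have hβ := congrArg QuadraticAlgebra.norm hmat.2
        simp only [map_mul, QuadraticAlgebra.norm_star] at hα hβ
        linear_combination (1 + c) * hα + (1 - c) * hβ
    _ = 0 := by rw [hp, mul_zero]

theorem upperSet_subset_torus_mul_upperSet_mul_torus [Fact (∀ r : K, r ^ 2 ≠ d + 0 * r)]
    (h2 : (2 : K) ≠ 0) {c y x Y X : K} (hc1 : c ≠ 1) (hc2 : c ≠ -1)
    (hp : (y + c) ^ 2 - d * x ^ 2 = c ^ 2 - 1) (hp' : (Y + c) ^ 2 - d * X ^ 2 = c ^ 2 - 1) :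
    upperSet d Y X ⊆ (torus d : Set (GL (Fin 2) K)) * upperSet d y x * torus d := by
  obtain ⟨k₁, k₂, hk₁, hk₂, h₁, h₂⟩ := exists_mul_upperFst_mul_eq_of_conic h2 hc1 hc2 hp hp'
  have hK : ∀ k : QuadraticAlgebra K d 0, k ≠ 0 → (linMatrix k 0).det ≠ 0 := fun k hk => by
    simpa [det_linMatrix] using norm_ne_zero hk
  have hS : (!![y, d * x; 0, 1] : Matrix (Fin 2) (Fin 2) K).det ≠ 0 := by
    simpa [Matrix.det_fin_two_of] using ne_zero_of_conic hp
  intro S' hS'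
  refine ⟨_, ⟨.mkOfDetNeZero _ (hK k₁ hk₁), ⟨k₁, rfl⟩, .mkOfDetNeZero _ hS, rfl, rfl⟩,
    .mkOfDetNeZero _ (hK k₂ hk₂), ⟨k₂, rfl⟩, Units.ext ?_⟩
  change linMatrix k₁ 0 * !![y, d * x; 0, 1] * linMatrix k₂ 0 = S'
  rw [hS', ← linMatrix_upperFst_upperSnd h2, ← linMatrix_upperFst_upperSnd h2, linMatrix_mul,
    linMatrix_mul, ← h₁, ← h₂]
  simp

theorem torus_mul_upperSet_mul_torus [Fact (∀ r : K, r ^ 2 ≠ d + 0 * r)]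
    (h2 : (2 : K) ≠ 0) {c y x : K} (hc1 : c ≠ 1) (hc2 : c ≠ -1)
    (hp : (y + c) ^ 2 - d * x ^ 2 = c ^ 2 - 1) :
    (torus d : Set (GL (Fin 2) K)) * upperSet d y x * torus d =
      ⋃ (p : K × K) (_ : (p.1 + c) ^ 2 - d * p.2 ^ 2 = c ^ 2 - 1),
        upperSet d p.1 p.2 * (torus d : Set (GL (Fin 2) K)) := by
  refine subset_antisymm (fun M hM => ?_) (Set.iUnion₂_subset fun p hp' => ?_)
  · obtain ⟨Y, X, hM'⟩ := exists_mem_upperSet_mul_torus (d := d) M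
    exact Set.mem_iUnion₂.mpr
      ⟨(Y, X), conic_of_mem_torus_mul_upperSet_mul_torus h2 (ne_zero_of_fact K d) hp hM hM', hM'⟩
  · calc upperSet d p.1 p.2 * (torus d : Set (GL (Fin 2) K))
        ⊆ (torus d : Set (GL (Fin 2) K)) * upperSet d y x * torus d * torus d :=
          Set.mul_subset_mul_right
            (upperSet_subset_torus_mul_upperSet_mul_torus h2 hc1 hc2 hp hp')
      _ = (torus d : Set (GL (Fin 2) K)) * upperSet d y x * torus d := by
          rw [mul_assoc _ (torus d : Set (GL (Fin 2) K)), Submonoid.coe_mul_self_eq]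

theorem disjoint_image_upperSet_mul_torus (hd : d ≠ 0) {p p' : K × K} (hpp' : p ≠ p') :
    Disjoint (pglProj K '' (upperSet d p.1 p.2 * torus d))
      (pglProj K '' (upperSet d p'.1 p'.2 * torus d)) := by
  rw [Set.disjoint_left]
  rintro _ ⟨M, hM, rfl⟩ ⟨N, hN, hNM⟩
  obtain ⟨h1, h2⟩ := eq_of_mem_upperSet_mul_torus hd hM (mem_mul_torus_of_pglProj_eq hN hNM)
  exact hpp' (Prod.ext h1 h2)

end NonsplitTorus

open NonsplitTorus

theorem stmt18_general (q : ℕ) (hodd : Odd q)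
    (F : Type*) [Field F] [Fintype F] [DecidableEq F] (hF : Fintype.card F = q)
    (δ : F) (hδ : ¬ IsSquare δ) (c : F) (hc1 : c ≠ 1) (hc2 : c ≠ -1) :
    (Finset.univ.filter
        (fun p : F × F => (p.1 + c) ^ 2 - δ * p.2 ^ 2 = c ^ 2 - 1)).card = q + 1 ∧
    (∀ p ∈ Finset.univ.filter
        (fun p : F × F => (p.1 + c) ^ 2 - δ * p.2 ^ 2 = c ^ 2 - 1),
      setK F δ * pglSet F p.1 (δ * p.2) 0 1 * setK F δ
        = ⋃ p' ∈ Finset.univ.filter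
            (fun p' : F × F => (p'.1 + c) ^ 2 - δ * p'.2 ^ 2 = c ^ 2 - 1),
            pglSet F p'.1 (δ * p'.2) 0 1 * setK F δ) ∧
    ((Finset.univ.filter
        (fun p : F × F => (p.1 + c) ^ 2 - δ * p.2 ^ 2 = c ^ 2 - 1) : Finset (F × F)) :
        Set (F × F)).PairwiseDisjoint
      (fun p' : F × F => pglSet F p'.1 (δ * p'.2) 0 1 * setK F δ) := by
  subst hF
  have hK : Fintype.card F % 2 = 1 := Nat.odd_iff.mp hodd
  have h2 : (2 : F) ≠ 0 := Ring.two_ne_zero (mt FiniteField.even_card_iff_char_two.mp (by omega))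
  have := QuadraticAlgebra.fact_of_not_isSquare hδ
  refine ⟨QuadraticAlgebra.card_conic hK hc1 hc2, fun p hp => ?_, fun p _ p' _ hpp' => ?_⟩
  · simp only [setK_eq_image, pglSet_eq_image, ← Set.image_mul,
      torus_mul_upperSet_mul_torus h2 hc1 hc2 (Finset.mem_filter.mp hp).2, Set.image_iUnion₂,
      Finset.mem_filter, Finset.mem_univ, true_and]
  · simpa only [Function.onFun, setK_eq_image, pglSet_eq_image, ← Set.image_mul] using
      disjoint_image_upperSet_mul_torus (QuadraticAlgebra.ne_zero_of_fact F δ) hpp'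

/-- For `c ≠ ±1`, the conic `(y+c)² - δx² = c²-1` has exactly `q+1` points over `F_q`, and for
any solution `(y,x)`, the double coset `K·!![y, δx; 0, 1]·K` is the disjoint union of the
`q+1` right cosets `!![y', δx'; 0, 1]·K`, one for each solution `(y', x')`. -/
theorem stmt18 (q : ℕ) (hq : IsPrimePow q) (hodd : Odd q)
    (F : Type*) [Field F] [Fintype F] [DecidableEq F] (hF : Fintype.card F = q)
    (δ : F) (hδ : ¬ IsSquare δ) (c : F) (hc1 : c ≠ 1) (hc2 : c ≠ -1) :
    (Finset.univ.filter
        (fun p : F × F => (p.1 + c) ^ 2 - δ * p.2 ^ 2 = c ^ 2 - 1)).card = q + 1 ∧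
    (∀ p ∈ Finset.univ.filter
        (fun p : F × F => (p.1 + c) ^ 2 - δ * p.2 ^ 2 = c ^ 2 - 1),
      setK F δ * pglSet F p.1 (δ * p.2) 0 1 * setK F δ
        = ⋃ p' ∈ Finset.univ.filter
            (fun p' : F × F => (p'.1 + c) ^ 2 - δ * p'.2 ^ 2 = c ^ 2 - 1),
            pglSet F p'.1 (δ * p'.2) 0 1 * setK F δ) ∧
    ((Finset.univ.filter
        (fun p : F × F => (p.1 + c) ^ 2 - δ * p.2 ^ 2 = c ^ 2 - 1) : Finset (F × F)) :
        Set (F × F)).PairwiseDisjoint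
      (fun p' : F × F => pglSet F p'.1 (δ * p'.2) 0 1 * setK F δ) :=
  stmt18_general q hodd F hF δ hδ c hc1 hc2
end
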